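/- Under hypotheses (H1) and (H3), for a = a(1,0), the function z ↦ E_z(|S₂(τ)| exp(a·S(τ)); τ = τ₁ < τ₂) is finite at every z ∈ ℕ*×ℕ*. -/

import Mathlib

/-!
Since the drift is nonzero, `D` has interior points, and since `∂D` is smooth at
`a = a(1,0)` with normal `(1,0)`, there is `b` with `φ(b) < 1`, `b₂ > a₂` (hence `b₁ < a₁`).
Then `v ↦ exp(b·v)` is strictly superharmonic, so the Green function `G` of the killed walk
satisfies `∑_v G(z,v) exp(b·v) ≤ exp(b·z) / (1 - φ(b))`. Decomposing the exit at the last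
position `v` in the quadrant, a jump `u` from `v` to `w = v + u` with `w₁ ≤ 0` obeys
`|w₂| exp(a·w) ≤ exp(b·v) (1/(b₂ - a₂) + |u₂|) exp((b₁,a₂)·u)`, and the right-hand factor in
`u` has finite `μ`-expectation by (H3).
-/

open scoped ENNReal Classical
open Filter

namespace KRWQ

/-- `n`-step transition probabilities of the homogeneous random walk with step
distribution `μ` on an abelian group `G`: `nstep μ n z z' = P_z(S(n) = z')`. -/
noncomputable def nstep {G : Type*} [AddCommGroup G] (μ : G → ℝ≥0∞) : ℕ → G → G → ℝ≥0∞
  | 0, z, z' => if z' = z then 1 else 0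
  | n + 1, z, z' => ∑' w : G, nstep μ n z w * μ (z' - w)

/-- `n`-step transition probabilities of the random walk killed outside the set `A`:
for `z ∈ A`, `nstepK μ A n z z' = P_z(S(n) = z', S(k) ∈ A for all k ≤ n)`. -/
noncomputable def nstepK {G : Type*} [AddCommGroup G] (μ : G → ℝ≥0∞) (A : Set G) :
    ℕ → G → G → ℝ≥0∞
  | 0, z, z' => if z' = z then 1 else 0
  | n + 1, z, z' => A.indicator (fun u => ∑' w : G, nstepK μ A n z w * μ (u - w)) z'

/-- Green function of the homogeneous random walk. -/
noncomputable def green {G : Type*} [AddCommGroup G] (μ : G → ℝ≥0∞) (z z' : G) : ℝ≥0∞ :=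
  ∑' n : ℕ, nstep μ n z z'

/-- Green function of the random walk killed outside `A`. -/
noncomputable def greenK {G : Type*} [AddCommGroup G] (μ : G → ℝ≥0∞) (A : Set G)
    (z z' : G) : ℝ≥0∞ :=
  ∑' n : ℕ, nstepK μ A n z z'

/-- Distribution of the exit position: for `z ∈ A`, `exitK μ A z w` is the probability
that the walk started at `z` first exits `A` (in finite time) at the point `w`,
i.e. `P_z(τ < ∞, S(τ) = w)` where `τ = inf{n ≥ 0 : S(n) ∉ A}`. -/
noncomputable def exitK {G : Type*} [AddCommGroup G] (μ : G → ℝ≥0∞) (A : Set G)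
    (z w : G) : ℝ≥0∞ :=
  Aᶜ.indicator (fun u => ∑' n : ℕ, ∑' v : G, nstepK μ A n z v * μ (u - v)) w

/-- `Eexit μ A z f = E_z(f(S(τ)); τ < ∞)` for a nonnegative `f`,
where `τ` is the first exit time from `A` and `z ∈ A`. -/
noncomputable def Eexit {G : Type*} [AddCommGroup G] (μ : G → ℝ≥0∞) (A : Set G) (z : G)
    (f : G → ℝ≥0∞) : ℝ≥0∞ :=
  ∑' w : G, exitK μ A z w * f w

/-- `EexitR μ A z f = E_z(f(S(τ)); τ < ∞)` for a signed `f` (real-valued version). -/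
noncomputable def EexitR {G : Type*} [AddCommGroup G] (μ : G → ℝ≥0∞) (A : Set G) (z : G)
    (f : G → ℝ) : ℝ :=
  ∑' w : G, (exitK μ A z w).toReal * f w

/-- Euclidean scalar product on `ℝ²`. -/
def dot (a b : ℝ × ℝ) : ℝ := a.1 * b.1 + a.2 * b.2

/-- Embedding of the lattice `ℤ²` into `ℝ²`. -/
def toR (z : ℤ × ℤ) : ℝ × ℝ := ((z.1 : ℝ), (z.2 : ℝ))

/-- Euclidean norm on `ℝ²`. -/
noncomputable def norE (p : ℝ × ℝ) : ℝ := Real.sqrt (p.1 ^ 2 + p.2 ^ 2)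

/-- Euclidean norm of a lattice point. -/
noncomputable def normZ (z : ℤ × ℤ) : ℝ := norE (toR z)

/-- The open quadrant `ℕ* × ℕ*`. -/
def quadrant : Set (ℤ × ℤ) := {z | 0 < z.1 ∧ 0 < z.2}

/-- The half plane `ℤ × ℕ*` (state space of the local process `Z¹₊`). -/
def upperHalf : Set (ℤ × ℤ) := {z | 0 < z.2}

/-- The half plane `ℕ* × ℤ` (state space of the local process `Z²₊`). -/
def rightHalf : Set (ℤ × ℤ) := {z | 0 < z.1}

/-- The jump generating function `φ(a) = ∑_z μ(z) exp(a·z)`. -/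
noncomputable def jumpGF (μ : ℤ × ℤ → ℝ≥0∞) (a : ℝ × ℝ) : ℝ≥0∞ :=
  ∑' z : ℤ × ℤ, μ z * ENNReal.ofReal (Real.exp (dot a (toR z)))

/-- Hypothesis (H1): the homogeneous random walk `S` with step distribution `μ`
is irreducible, and its mean `m = ∑_z z μ(z)` exists and is nonzero. -/
def H1 (μ : ℤ × ℤ → ℝ≥0∞) : Prop :=
  (∀ z z' : ℤ × ℤ, ∃ n : ℕ, 0 < nstep μ n z z') ∧
    Summable (fun z : ℤ × ℤ => ((z.1 : ℝ)) * (μ z).toReal) ∧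
    Summable (fun z : ℤ × ℤ => ((z.2 : ℝ)) * (μ z).toReal) ∧
    ((∑' z : ℤ × ℤ, ((z.1 : ℝ)) * (μ z).toReal, ∑' z : ℤ × ℤ, ((z.2 : ℝ)) * (μ z).toReal)
      ≠ ((0 : ℝ), (0 : ℝ)))

/-- Hypothesis (H2): the random walk killed outside the quadrant is irreducible
on the quadrant. -/
def H2 (μ : ℤ × ℤ → ℝ≥0∞) : Prop :=
  ∀ z ∈ quadrant, ∀ z' ∈ quadrant, ∃ n : ℕ, 0 < nstepK μ quadrant n z z'

/-- Hypothesis (H3): the jump generating function is finite everywhere on `ℝ²`. -/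
def H3 (μ : ℤ × ℤ → ℝ≥0∞) : Prop := ∀ a : ℝ × ℝ, jumpGF μ a < ⊤

/-- `d` is a greatest common divisor of the set `K` of natural numbers. -/
def IsGcdOfSet (K : Set ℕ) (d : ℕ) : Prop :=
  (∀ k ∈ K, d ∣ k) ∧ ∀ c : ℕ, (∀ k ∈ K, c ∣ k) → c ∣ d

/-- First marginal of `μ`: step distribution of the coordinate walk `S₁`. -/
noncomputable def marg1 (μ : ℤ × ℤ → ℝ≥0∞) : ℤ → ℝ≥0∞ := fun x => ∑' y : ℤ, μ (x, y)

/-- Second marginal of `μ`: step distribution of the coordinate walk `S₂`. -/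
noncomputable def marg2 (μ : ℤ × ℤ → ℝ≥0∞) : ℤ → ℝ≥0∞ := fun y => ∑' x : ℤ, μ (x, y)

/-- Hypothesis (H4): the coordinate random walks `S₁` and `S₂` are aperiodic on `ℤ`. -/
def H4 (μ : ℤ × ℤ → ℝ≥0∞) : Prop :=
  IsGcdOfSet {k : ℕ | 0 < k ∧ 0 < nstep (marg1 μ) k (0 : ℤ) 0} 1 ∧
    IsGcdOfSet {k : ℕ | 0 < k ∧ 0 < nstep (marg2 μ) k (0 : ℤ) 0} 1

/-- The set `𝒮²₊` of unit vectors of `ℝ²` with nonnegative coordinates. -/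
def Spos : Set (ℝ × ℝ) := {q | 0 ≤ q.1 ∧ 0 ≤ q.2 ∧ norE q = 1}

/-- `aOf` is the map `q ↦ a(q)`, the inverse of the homeomorphism
`a ↦ ∇φ(a)/|∇φ(a)|` from `∂D` onto the unit circle (extended to all nonzero `q` by
homogeneity).  Equivalently, `a(q)` is the unique point of `D = {a : φ(a) ≤ 1}` where
the linear functional `a ↦ a·q` attains its maximum over `D`, and it lies on `∂D`. -/
def IsDirMap (μ : ℤ × ℤ → ℝ≥0∞) (aOf : ℝ × ℝ → ℝ × ℝ) : Prop :=
  ∀ q : ℝ × ℝ, q ≠ 0 →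
    jumpGF μ (aOf q) = 1 ∧
      ∀ a : ℝ × ℝ, jumpGF μ a ≤ 1 → a ≠ aOf q → dot a q < dot (aOf q) q

/-- The arc `Γ₊ = {a ∈ ∂D : q(a) ∈ 𝒮²₊}`. -/
def GammaPlus (aOf : ℝ × ℝ → ℝ × ℝ) : Set (ℝ × ℝ) := {a | ∃ q ∈ Spos, a = aOf q}

/-- The integrand appearing in the boundary term of `h_a`. -/
noncomputable def haIntegrand (aOf : ℝ × ℝ → ℝ × ℝ) (a : ℝ × ℝ) (w : ℤ × ℤ) : ℝ :=
  if a = aOf ((0 : ℝ), (1 : ℝ)) then (w.1 : ℝ) * Real.exp (dot a (toR w))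
  else if a = aOf ((1 : ℝ), (0 : ℝ)) then (w.2 : ℝ) * Real.exp (dot a (toR w))
  else Real.exp (dot a (toR w))

/-- The leading term of `h_a`. -/
noncomputable def haLead (aOf : ℝ × ℝ → ℝ × ℝ) (a : ℝ × ℝ) (z : ℤ × ℤ) : ℝ :=
  if a = aOf ((0 : ℝ), (1 : ℝ)) then (z.1 : ℝ) * Real.exp (dot a (toR z))
  else if a = aOf ((1 : ℝ), (0 : ℝ)) then (z.2 : ℝ) * Real.exp (dot a (toR z))
  else Real.exp (dot a (toR z))

/-- The harmonic function `h_a` of the killed random walk, defined by (1.3). -/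
noncomputable def haFun (μ : ℤ × ℤ → ℝ≥0∞) (aOf : ℝ × ℝ → ℝ × ℝ) (a : ℝ × ℝ)
    (z : ℤ × ℤ) : ℝ :=
  haLead aOf a z - EexitR μ quadrant z (haIntegrand aOf a)

/-- Expectation over the event `{τ = τ₁ < τ₂}`, i.e. the walk exits the quadrant
through the boundary `{w : w₁ ≤ 0, w₂ > 0}`. -/
noncomputable def Eexit1 (μ : ℤ × ℤ → ℝ≥0∞) (z : ℤ × ℤ) (f : ℤ × ℤ → ℝ≥0∞) : ℝ≥0∞ :=
  ∑' w : ℤ × ℤ, (if w.1 ≤ 0 ∧ 0 < w.2 then exitK μ quadrant z w * f w else 0)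

/-- The support function `w ↦ a(w)·w = max_{a ∈ D} a·w`, with the convention that it
vanishes at `w = 0`. -/
noncomputable def support (aOf : ℝ × ℝ → ℝ × ℝ) (w : ℝ × ℝ) : ℝ :=
  if w = 0 then 0 else dot (aOf w) w

/-- The function `λ_ε(q,w) = a(w)·w + a(q-w)·(q-w) - ε|w|`. -/
noncomputable def lamEps (aOf : ℝ × ℝ → ℝ × ℝ) (ε : ℝ) (q w : ℝ × ℝ) : ℝ :=
  support aOf w + support aOf (q - w) - ε * norE w

/-- The principal part `Ξ^q_δ(z,zₙ)` of the renewal equation. -/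
noncomputable def XiQ (μ : ℤ × ℤ → ℝ≥0∞) (q : ℝ × ℝ) (δ : ℝ) (z zn : ℤ × ℤ) : ℝ :=
  if q = ((1 : ℝ), (0 : ℝ)) then
    (greenK μ upperHalf z zn).toReal -
      ∑' w : ℤ × ℤ, (exitK μ quadrant z w).toReal *
        (if w.1 ≤ 0 ∧ 0 < w.2 ∧ normZ w < δ * normZ zn then
          (greenK μ upperHalf w zn).toReal else 0)
  else if q = ((0 : ℝ), (1 : ℝ)) then
    (greenK μ rightHalf z zn).toReal -
      ∑' w : ℤ × ℤ, (exitK μ quadrant z w).toReal *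
        (if w.2 ≤ 0 ∧ 0 < w.1 ∧ normZ w < δ * normZ zn then
          (greenK μ rightHalf w zn).toReal else 0)
  else
    (green μ z zn).toReal -
      ∑' w : ℤ × ℤ, (exitK μ quadrant z w).toReal *
        (if normZ w < δ * normZ zn then (green μ w zn).toReal else 0)

open Real

lemma exp_le_one_add_add_sq_mul_exp_abs (s : ℝ) : exp s ≤ 1 + s + s ^ 2 * exp |s| := by
  have h1 : exp s * (1 - s) ≤ 1 := by
    have := mul_le_mul_of_nonneg_left (by linarith [add_one_le_exp (-s)] : 1 - s ≤ exp (-s))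
      (exp_pos s).le
    rwa [← exp_add, add_neg_cancel, exp_zero] at this
  rcases le_or_gt s 0 with hs | hs
  · have h2 : 1 - exp s ≤ -s := by linarith [add_one_le_exp s]
    have h3 : s ^ 2 ≤ s ^ 2 * exp |s| :=
      le_mul_of_one_le_right (sq_nonneg s) (one_le_exp (abs_nonneg s))
    nlinarith
  · rw [abs_of_pos hs]
    nlinarith

lemma abs_le_exp_add_exp_neg (y : ℝ) : |y| ≤ exp y + exp (-y) := by
  rcases abs_cases y with ⟨h, -⟩ | ⟨h, -⟩ <;> rw [h]
  · linarith [add_one_le_exp y, exp_pos (-y)]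
  · linarith [add_one_le_exp (-y), exp_pos y]

lemma exp_mul_le_quadratic {t : ℝ} (ht0 : 0 ≤ t) (ht1 : t ≤ 1) (y : ℝ) :
    exp (t * y) ≤ 1 + t * y + 2 * t ^ 2 * (exp (2 * y) + exp (-(2 * y))) := by
  have hty : |t * y| ≤ |y| := by
    rw [abs_mul, abs_of_nonneg ht0]
    exact mul_le_of_le_one_left (abs_nonneg y) ht1
  have hy2 : y ^ 2 ≤ 2 * exp |y| := by
    nlinarith [quadratic_le_exp_of_nonneg (abs_nonneg y), sq_abs y, abs_nonneg y]
  have h2y : exp |y| * exp |y| ≤ exp (2 * y) + exp (-(2 * y)) := by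
    rw [← exp_add, ← two_mul]
    rcases abs_cases y with ⟨h, -⟩ | ⟨h, -⟩ <;> rw [h]
    · linarith [exp_pos (-(2 * y))]
    · rw [mul_neg]; linarith [exp_pos (2 * y)]
  calc exp (t * y) ≤ 1 + t * y + (t * y) ^ 2 * exp |t * y| := exp_le_one_add_add_sq_mul_exp_abs _
    _ ≤ 1 + t * y + t ^ 2 * (2 * exp |y|) * exp |y| := by
        rw [mul_pow]
        gcongr
    _ ≤ _ := by nlinarith [sq_nonneg t]

lemma mul_exp_neg_mul_le {ε : ℝ} (hε : 0 < ε) (x : ℝ) : x * exp (-(ε * x)) ≤ ε⁻¹ := by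
  have h : ε * x * exp (-(ε * x)) ≤ 1 := by
    have := mul_le_mul_of_nonneg_right (by linarith [add_one_le_exp (ε * x)] : ε * x ≤ exp (ε * x))
      (exp_pos (-(ε * x))).le
    rwa [← exp_add, add_neg_cancel, exp_zero] at this
  calc x * exp (-(ε * x)) = ε⁻¹ * (ε * x * exp (-(ε * x))) := by field_simp
    _ ≤ ε⁻¹ := mul_le_of_le_one_right (inv_nonneg.2 hε.le) h

lemma dot_add_left (c d w : ℝ × ℝ) : dot (c + d) w = dot c w + dot d w := by
  simp only [dot, Prod.fst_add, Prod.snd_add]; ring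

lemma dot_sub_left (c d w : ℝ × ℝ) : dot (c - d) w = dot c w - dot d w := by
  simp only [dot, Prod.fst_sub, Prod.snd_sub]; ring

lemma dot_smul_left (t : ℝ) (d w : ℝ × ℝ) : dot (t • d) w = t * dot d w := by
  simp only [dot, Prod.smul_fst, Prod.smul_snd, smul_eq_mul]; ring

lemma toR_sub (w v : ℤ × ℤ) : toR (w - v) = toR w - toR v := by
  simp [toR]

lemma toR_add (w v : ℤ × ℤ) : toR (w + v) = toR w + toR v := by
  simp [toR]

section JumpGF

variable {μ : ℤ × ℤ → ℝ≥0∞}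

lemma H3.ne_top (h3 : H3 μ) (z : ℤ × ℤ) : μ z ≠ ⊤ := by
  refine ne_top_of_le_ne_top (h3 0).ne ?_
  calc μ z = μ z * ENNReal.ofReal (exp (dot 0 (toR z))) := by simp [dot]
    _ ≤ jumpGF μ 0 := ENNReal.le_tsum (f := fun z => μ z * ENNReal.ofReal (exp (dot 0 (toR z)))) z

noncomputable def jumpGFReal (μ : ℤ × ℤ → ℝ≥0∞) (c : ℝ × ℝ) : ℝ :=
  ∑' z : ℤ × ℤ, (μ z).toReal * exp (dot c (toR z))

noncomputable def jumpGFDeriv (μ : ℤ × ℤ → ℝ≥0∞) (c d : ℝ × ℝ) : ℝ :=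
  ∑' z : ℤ × ℤ, (μ z).toReal * (dot d (toR z) * exp (dot c (toR z)))

lemma jumpGFReal_nonneg (c : ℝ × ℝ) : 0 ≤ jumpGFReal μ c :=
  tsum_nonneg fun _ => by positivity

lemma H3.summable_jumpGFReal (h3 : H3 μ) (c : ℝ × ℝ) :
    Summable fun z : ℤ × ℤ => (μ z).toReal * exp (dot c (toR z)) := by
  refine (ENNReal.summable_toReal (h3 c).ne).congr fun z => ?_
  rw [ENNReal.toReal_mul, ENNReal.toReal_ofReal (exp_pos _).le]

lemma H3.jumpGF_eq_ofReal (h3 : H3 μ) (c : ℝ × ℝ) :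
    jumpGF μ c = ENNReal.ofReal (jumpGFReal μ c) := by
  rw [jumpGFReal, ENNReal.ofReal_tsum_of_nonneg (fun _ => by positivity)
    (h3.summable_jumpGFReal c)]
  refine tsum_congr fun z => ?_
  rw [ENNReal.ofReal_mul ENNReal.toReal_nonneg, ENNReal.ofReal_toReal (h3.ne_top z)]

lemma H3.jumpGF_lt_one_iff (h3 : H3 μ) {c : ℝ × ℝ} : jumpGF μ c < 1 ↔ jumpGFReal μ c < 1 := by
  rw [h3.jumpGF_eq_ofReal, ENNReal.ofReal_lt_one]

lemma H3.jumpGFReal_eq_one (h3 : H3 μ) {c : ℝ × ℝ} (hc : jumpGF μ c = 1) :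
    jumpGFReal μ c = 1 := by
  rwa [h3.jumpGF_eq_ofReal, ENNReal.ofReal_eq_one] at hc

lemma jumpGFReal_zero (hprob : ∑' z : ℤ × ℤ, μ z = 1) (h3 : H3 μ) : jumpGFReal μ 0 = 1 :=
  h3.jumpGFReal_eq_one (by simpa [jumpGF, dot] using hprob)

lemma H3.summable_toReal_mul (h3 : H3 μ) {F : ℤ × ℤ → ℝ} {c₁ c₂ : ℝ × ℝ}
    (hF : ∀ z, |F z| ≤ exp (dot c₁ (toR z)) + exp (dot c₂ (toR z))) :
    Summable fun z => (μ z).toReal * F z := by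
  refine Summable.of_norm_bounded
    ((h3.summable_jumpGFReal c₁).add (h3.summable_jumpGFReal c₂)) fun z => ?_
  rw [Real.norm_eq_abs, abs_mul, ENNReal.abs_toReal, ← mul_add]
  exact mul_le_mul_of_nonneg_left (hF z) ENNReal.toReal_nonneg

lemma H3.summable_jumpGFDeriv (h3 : H3 μ) (c d : ℝ × ℝ) :
    Summable fun z => (μ z).toReal * (dot d (toR z) * exp (dot c (toR z))) := by
  refine h3.summable_toReal_mul (c₁ := c + d) (c₂ := c - d) fun z => ?_
  rw [abs_mul, abs_of_pos (exp_pos _), dot_add_left, dot_sub_left, sub_eq_add_neg, exp_add,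
    exp_add, ← mul_add, mul_comm]
  exact mul_le_mul_of_nonneg_left (abs_le_exp_add_exp_neg _) (exp_pos _).le

lemma H3.jumpGFDeriv_eq (h3 : H3 μ) (c d : ℝ × ℝ) :
    jumpGFDeriv μ c d = d.1 * jumpGFDeriv μ c (1, 0) + d.2 * jumpGFDeriv μ c (0, 1) := by
  rw [jumpGFDeriv, jumpGFDeriv, jumpGFDeriv, ← tsum_mul_left, ← tsum_mul_left,
    ← Summable.tsum_add ((h3.summable_jumpGFDeriv c _).mul_left _)
      ((h3.summable_jumpGFDeriv c _).mul_left _)]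
  refine tsum_congr fun z => ?_
  simp only [dot, toR]
  ring

lemma H3.jumpGFReal_add_jumpGFDeriv_le (h3 : H3 μ) (c d : ℝ × ℝ) :
    jumpGFReal μ c + jumpGFDeriv μ c d ≤ jumpGFReal μ (c + d) := by
  rw [jumpGFReal, jumpGFDeriv, ← Summable.tsum_add (h3.summable_jumpGFReal c)
    (h3.summable_jumpGFDeriv c d)]
  refine Summable.tsum_le_tsum (fun z => ?_) ((h3.summable_jumpGFReal c).add
    (h3.summable_jumpGFDeriv c d)) (h3.summable_jumpGFReal (c + d))
  rw [dot_add_left, exp_add, ← mul_add]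
  gcongr
  nlinarith [add_one_le_exp (dot d (toR z)), exp_pos (dot c (toR z))]

lemma H3.jumpGFReal_add_smul_le (h3 : H3 μ) (c d : ℝ × ℝ) {t : ℝ} (ht0 : 0 ≤ t) (ht1 : t ≤ 1) :
    jumpGFReal μ (c + t • d) ≤ jumpGFReal μ c + t * jumpGFDeriv μ c d +
      2 * t ^ 2 * (jumpGFReal μ (c + (2 : ℝ) • d) + jumpGFReal μ (c - (2 : ℝ) • d)) := by
  have hsum := ((h3.summable_jumpGFReal c).hasSum.add
    ((h3.summable_jumpGFDeriv c d).hasSum.mul_left t)).add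
    (((h3.summable_jumpGFReal (c + (2 : ℝ) • d)).hasSum.add
      (h3.summable_jumpGFReal (c - (2 : ℝ) • d)).hasSum).mul_left
      (2 * t ^ 2))
  refine hasSum_le (fun z => ?_) (h3.summable_jumpGFReal _).hasSum hsum
  simp only [dot_add_left, dot_sub_left, dot_smul_left]
  simp only [sub_eq_add_neg, exp_add]
  have := exp_mul_le_quadratic ht0 ht1 (dot d (toR z))
  calc (μ z).toReal * (exp (dot c (toR z)) * exp (t * dot d (toR z)))
      ≤ (μ z).toReal * (exp (dot c (toR z)) * (1 + t * dot d (toR z) + 2 * t ^ 2 *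
          (exp (2 * dot d (toR z)) + exp (-(2 * dot d (toR z)))))) := by gcongr
    _ = _ := by ring

lemma H3.exists_jumpGFReal_add_smul_lt (h3 : H3 μ) {c d : ℝ × ℝ}
    (hd : jumpGFDeriv μ c d < 0) : ∃ t : ℝ, 0 < t ∧ jumpGFReal μ (c + t • d) < jumpGFReal μ c := by
  set K := 2 * (jumpGFReal μ (c + (2 : ℝ) • d) + jumpGFReal μ (c - (2 : ℝ) • d))
  have hK : 0 ≤ K :=
    mul_nonneg zero_le_two (add_nonneg (jumpGFReal_nonneg _) (jumpGFReal_nonneg _))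
  set t := min 1 (-jumpGFDeriv μ c d / (K + 1))
  have ht0 : 0 < t := lt_min one_pos (div_pos (neg_pos.2 hd) (by linarith))
  have htK : t * (K + 1) ≤ -jumpGFDeriv μ c d := (le_div_iff₀ (by linarith)).1 (min_le_right _ _)
  refine ⟨t, ht0, ?_⟩
  have := h3.jumpGFReal_add_smul_le c d ht0.le (min_le_left _ _)
  nlinarith

lemma H1.exists_jumpGFDeriv_zero_neg (h1 : H1 μ) : ∃ d, jumpGFDeriv μ 0 d < 0 := by
  obtain ⟨-, s₁, s₂, hm⟩ := h1
  set m₁ := ∑' z : ℤ × ℤ, (z.1 : ℝ) * (μ z).toReal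
  set m₂ := ∑' z : ℤ × ℤ, (z.2 : ℝ) * (μ z).toReal
  refine ⟨(-m₁, -m₂), ?_⟩
  have hderiv : jumpGFDeriv μ 0 (-m₁, -m₂) = -m₁ * m₁ + -m₂ * m₂ := by
    rw [jumpGFDeriv, ← tsum_mul_left, ← tsum_mul_left, ← Summable.tsum_add (s₁.mul_left _)
      (s₂.mul_left _)]
    refine tsum_congr fun z => ?_
    simp only [dot, toR, Prod.fst_zero, Prod.snd_zero, zero_mul, add_zero, exp_zero]
    ring
  have : m₁ ≠ 0 ∨ m₂ ≠ 0 := by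
    by_contra! h
    exact hm (by rw [h.1, h.2])
  rw [hderiv]
  rcases this with h | h
  · nlinarith [mul_self_pos.2 h, mul_self_nonneg m₂]
  · nlinarith [mul_self_pos.2 h, mul_self_nonneg m₁]

lemma exists_jumpGFReal_lt_one (hprob : ∑' z : ℤ × ℤ, μ z = 1) (h1 : H1 μ) (h3 : H3 μ) :
    ∃ x, jumpGFReal μ x < 1 := by
  obtain ⟨d, hd⟩ := h1.exists_jumpGFDeriv_zero_neg
  obtain ⟨t, -, ht⟩ := h3.exists_jumpGFReal_add_smul_lt hd
  exact ⟨0 + t • d, ht.trans_eq (jumpGFReal_zero hprob h3)⟩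

end JumpGF

section DirMap

variable {μ : ℤ × ℤ → ℝ≥0∞} {aOf : ℝ × ℝ → ℝ × ℝ}

lemma IsDirMap.dot_lt (haOf : IsDirMap μ aOf) {q : ℝ × ℝ} (hq : q ≠ 0) {b : ℝ × ℝ}
    (hb : jumpGF μ b < 1) : dot b q < dot (aOf q) q :=
  (haOf q hq).2 b hb.le fun h => by rw [h, (haOf q hq).1] at hb; exact lt_irrefl _ hb

/-- Since `∂D` is smooth with normal `(1, 0)` at `a(1,0)`, moving from `a(1,0)` along
`(-1, 1)` enters the interior of `D`. -/
lemma exists_jumpGF_lt_one_snd_gt (hprob : ∑' z : ℤ × ℤ, μ z = 1) (h1 : H1 μ) (h3 : H3 μ)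
    (haOf : IsDirMap μ aOf) : ∃ b : ℝ × ℝ, jumpGF μ b < 1 ∧ (aOf (1, 0)).2 < b.2 := by
  set a := aOf (1, 0)
  have hq : ((1 : ℝ), (0 : ℝ)) ≠ 0 := by simp
  have ha : jumpGFReal μ a = 1 := h3.jumpGFReal_eq_one (haOf _ hq).1
  set G₁ := jumpGFDeriv μ a (1, 0)
  set G₂ := jumpGFDeriv μ a (0, 1)
  have hG : ∀ d, jumpGFDeriv μ a d = d.1 * G₁ + d.2 * G₂ := h3.jumpGFDeriv_eq a
  have hdescent : ∀ d, jumpGFDeriv μ a d < 0 → ∃ t : ℝ, 0 < t ∧ jumpGF μ (a + t • d) < 1 := by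
    intro d hd
    obtain ⟨t, ht, hlt⟩ := h3.exists_jumpGFReal_add_smul_lt hd
    exact ⟨t, ht, h3.jumpGF_lt_one_iff.2 (hlt.trans_eq ha)⟩
  -- `a` maximises the first coordinate over `D`
  have hfst : ∀ d, jumpGFDeriv μ a d < 0 → d.1 < 0 := by
    intro d hd
    obtain ⟨t, ht, hlt⟩ := hdescent d hd
    have := haOf.dot_lt hq hlt
    simp only [dot, Prod.fst_add, Prod.smul_fst, smul_eq_mul] at this
    nlinarith
  have hG₂ : G₂ = 0 := by
    by_contra h
    have := hfst (0, -G₂) (by rw [hG]; nlinarith [mul_self_pos.2 h])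
    exact lt_irrefl _ this
  have hG₁ : 0 < G₁ := by
    obtain ⟨x, hx⟩ := exists_jumpGFReal_lt_one hprob h1 h3
    have hconv := h3.jumpGFReal_add_jumpGFDeriv_le a (x - a)
    rw [add_sub_cancel, ha, hG, hG₂] at hconv
    have hx₁ := haOf.dot_lt hq (h3.jumpGF_lt_one_iff.2 hx)
    simp only [dot, Prod.fst_sub, Prod.snd_sub] at hconv hx₁
    nlinarith
  obtain ⟨t, ht, hb⟩ := hdescent (-1, 1) (by rw [hG, hG₂]; linarith)
  exact ⟨a + t • (-1, 1), hb, by simp; linarith⟩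

end DirMap

section KilledWalk

variable {μ : ℤ × ℤ → ℝ≥0∞}

noncomputable def expWeight (b : ℝ × ℝ) (v : ℤ × ℤ) : ℝ≥0∞ :=
  ENNReal.ofReal (exp (dot b (toR v)))

lemma expWeight_add (b : ℝ × ℝ) (v u : ℤ × ℤ) :
    expWeight b (v + u) = expWeight b v * expWeight b u := by
  rw [expWeight, expWeight, expWeight, ← ENNReal.ofReal_mul (exp_pos _).le, ← exp_add, toR_add]
  congr 2
  simp only [dot, Prod.fst_add, Prod.snd_add]
  ring

lemma tsum_mu_sub_mul_expWeight (b : ℝ × ℝ) (w : ℤ × ℤ) :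
    ∑' v, μ (v - w) * expWeight b v = jumpGF μ b * expWeight b w := by
  calc ∑' v, μ (v - w) * expWeight b v
      = ∑' v, μ (Equiv.subRight w v) * expWeight b (Equiv.subRight w v) * expWeight b w :=
        tsum_congr fun v => by rw [Equiv.subRight_apply, mul_assoc, ← expWeight_add, sub_add_cancel]
    _ = ∑' u, μ u * expWeight b u * expWeight b w :=
        (Equiv.subRight w).tsum_eq fun u => μ u * expWeight b u * expWeight b w
    _ = jumpGF μ b * expWeight b w := by rw [ENNReal.tsum_mul_right]; rfl

lemma tsum_nstepK_mul_expWeight_le (A : Set (ℤ × ℤ)) (z : ℤ × ℤ) (b : ℝ × ℝ) (n : ℕ) :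
    ∑' v, nstepK μ A n z v * expWeight b v ≤ jumpGF μ b ^ n * expWeight b z := by
  induction n with
  | zero =>
    simp only [nstepK, ite_mul, one_mul, zero_mul, pow_zero]
    rw [tsum_ite_eq]
  | succ n ih =>
    calc ∑' v, nstepK μ A (n + 1) z v * expWeight b v
        ≤ ∑' v, (∑' w, nstepK μ A n z w * μ (v - w)) * expWeight b v :=
          ENNReal.tsum_le_tsum fun v => by gcongr; exact Set.indicator_le_self A _ v
      _ = ∑' w, nstepK μ A n z w * ∑' v, μ (v - w) * expWeight b v := by
          simp_rw [← ENNReal.tsum_mul_right, ← ENNReal.tsum_mul_left, mul_assoc]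
          exact ENNReal.tsum_comm
      _ = jumpGF μ b * ∑' w, nstepK μ A n z w * expWeight b w := by
          simp_rw [tsum_mu_sub_mul_expWeight, ← ENNReal.tsum_mul_left, mul_left_comm]
      _ ≤ jumpGF μ b * (jumpGF μ b ^ n * expWeight b z) := by gcongr
      _ = jumpGF μ b ^ (n + 1) * expWeight b z := by rw [pow_succ', mul_assoc]

lemma tsum_greenK_mul_expWeight_le (A : Set (ℤ × ℤ)) (z : ℤ × ℤ) (b : ℝ × ℝ) :
    ∑' v, greenK μ A z v * expWeight b v ≤ (1 - jumpGF μ b)⁻¹ * expWeight b z :=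
  calc ∑' v, greenK μ A z v * expWeight b v
      = ∑' n, ∑' v, nstepK μ A n z v * expWeight b v := by
        simp_rw [greenK, ← ENNReal.tsum_mul_right]
        exact ENNReal.tsum_comm
    _ ≤ ∑' n, jumpGF μ b ^ n * expWeight b z :=
        ENNReal.tsum_le_tsum (tsum_nstepK_mul_expWeight_le A z b)
    _ = (1 - jumpGF μ b)⁻¹ * expWeight b z := by
        rw [ENNReal.tsum_mul_right, ENNReal.tsum_geometric]

lemma nstepK_eq_zero_of_notMem {A : Set (ℤ × ℤ)} {z v : ℤ × ℤ} (hz : z ∈ A) (hv : v ∉ A)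
    (n : ℕ) : nstepK μ A n z v = 0 := by
  cases n with
  | zero => simp [nstepK, ne_of_mem_of_not_mem hz hv |>.symm]
  | succ n => simp [nstepK, Set.indicator_of_notMem hv]

lemma greenK_eq_zero_of_notMem {A : Set (ℤ × ℤ)} {z v : ℤ × ℤ} (hz : z ∈ A) (hv : v ∉ A) :
    greenK μ A z v = 0 := by
  simp [greenK, nstepK_eq_zero_of_notMem hz hv]

-- Decompose the exit according to the last position `v` of the walk inside `A`.
lemma Eexit_eq_tsum_greenK_mul {A : Set (ℤ × ℤ)} (z : ℤ × ℤ) {f : ℤ × ℤ → ℝ≥0∞}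
    (hf : ∀ w ∈ A, f w = 0) :
    Eexit μ A z f = ∑' v, greenK μ A z v * ∑' w, μ (w - v) * f w := by
  have hexit : ∀ w, exitK μ A z w * f w = ∑' n, ∑' v, nstepK μ A n z v * (μ (w - v) * f w) := by
    intro w
    by_cases hw : w ∈ A
    · simp [hf w hw]
    · simp_rw [exitK, Set.indicator_of_mem (Set.mem_compl hw), ← ENNReal.tsum_mul_right, mul_assoc]
  calc Eexit μ A z f = ∑' w, ∑' n, ∑' v, nstepK μ A n z v * (μ (w - v) * f w) :=
        tsum_congr hexit
    _ = ∑' n, ∑' w, ∑' v, nstepK μ A n z v * (μ (w - v) * f w) := ENNReal.tsum_comm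
    _ = ∑' n, ∑' v, ∑' w, nstepK μ A n z v * (μ (w - v) * f w) :=
        tsum_congr fun _ => ENNReal.tsum_comm
    _ = ∑' v, ∑' n, ∑' w, nstepK μ A n z v * (μ (w - v) * f w) := ENNReal.tsum_comm
    _ = _ := by simp_rw [ENNReal.tsum_mul_left, greenK, ENNReal.tsum_mul_right]

end KilledWalk

section LeftExit

variable {μ : ℤ × ℤ → ℝ≥0∞}

lemma abs_snd_mul_exp_dot_le {a b v w : ℝ × ℝ} (h₁ : b.1 ≤ a.1) (h₂ : a.2 < b.2)
    (hv : 0 ≤ v.2) (hw : w.1 ≤ 0) :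
    |w.2| * exp (dot a w) ≤
      exp (dot b v) * (((b.2 - a.2)⁻¹ + |(w - v).2|) * exp (dot (b.1, a.2) (w - v))) := by
  set ε := b.2 - a.2
  set u := w - v
  have hε : 0 < ε := sub_pos.2 h₂
  have hexp : exp (dot a w) ≤ exp (dot b v) * exp (-(ε * v.2)) * exp (dot (b.1, a.2) u) := by
    rw [← exp_add, ← exp_add]
    refine exp_le_exp.2 ?_
    have : dot a w = dot b v + -(ε * v.2) + dot (b.1, a.2) u + (a.1 - b.1) * w.1 := by
      simp only [dot, u, ε, Prod.fst_sub, Prod.snd_sub]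
      ring
    nlinarith [mul_nonneg (sub_nonneg.2 h₁) (neg_nonneg.2 hw)]
  have hw₂ : |w.2| * exp (-(ε * v.2)) ≤ ε⁻¹ + |u.2| := by
    have habs : |w.2| ≤ v.2 + |u.2| := by
      calc |w.2| = |v.2 + u.2| := by simp [u]
        _ ≤ v.2 + |u.2| := (abs_add_le _ _).trans_eq (by rw [abs_of_nonneg hv])
    have hle1 : exp (-(ε * v.2)) ≤ 1 := exp_le_one_iff.2 (by nlinarith)
    calc |w.2| * exp (-(ε * v.2)) ≤ (v.2 + |u.2|) * exp (-(ε * v.2)) := by gcongr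
      _ = v.2 * exp (-(ε * v.2)) + |u.2| * exp (-(ε * v.2)) := add_mul _ _ _
      _ ≤ ε⁻¹ + |u.2| := add_le_add (mul_exp_neg_mul_le hε _)
          (mul_le_of_le_one_right (abs_nonneg _) hle1)
  calc |w.2| * exp (dot a w)
      ≤ |w.2| * (exp (dot b v) * exp (-(ε * v.2)) * exp (dot (b.1, a.2) u)) := by gcongr
    _ = exp (dot b v) * ((|w.2| * exp (-(ε * v.2))) * exp (dot (b.1, a.2) u)) := by ring
    _ ≤ exp (dot b v) * ((ε⁻¹ + |u.2|) * exp (dot (b.1, a.2) u)) := by gcongr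

lemma tsum_mu_sub_mul_leftExit_le {a b : ℝ × ℝ} (h₁ : b.1 ≤ a.1) (h₂ : a.2 < b.2)
    {v : ℤ × ℤ} (hv : 0 ≤ v.2) :
    ∑' w, μ (w - v) * (if w.1 ≤ 0 ∧ 0 < w.2 then
        ENNReal.ofReal (|(w.2 : ℝ)| * exp (dot a (toR w))) else 0) ≤
      expWeight b v * ∑' u, μ u *
        ENNReal.ofReal (((b.2 - a.2)⁻¹ + |(u.2 : ℝ)|) * exp (dot (b.1, a.2) (toR u))) := by
  rw [← ENNReal.tsum_mul_left, ← (Equiv.subRight v).tsum_eq fun u => expWeight b v * (μ u *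
    ENNReal.ofReal (((b.2 - a.2)⁻¹ + |(u.2 : ℝ)|) * exp (dot (b.1, a.2) (toR u))))]
  refine ENNReal.tsum_le_tsum fun w => ?_
  split_ifs with hw
  · have := abs_snd_mul_exp_dot_le (v := toR v) (w := toR w) h₁ h₂ (by simpa [toR] using hv)
      (by simpa [toR] using hw.1)
    rw [Equiv.subRight_apply, mul_left_comm, expWeight, ← ENNReal.ofReal_mul (exp_pos _).le]
    gcongr μ (w - v) * ENNReal.ofReal ?_
    rw [← toR_sub] at this
    exact this
  · simp

lemma H3.tsum_mul_ofReal_add_abs_snd_mul_exp_lt_top (h3 : H3 μ) {C : ℝ} (hC : 0 ≤ C)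
    (c : ℝ × ℝ) :
    ∑' u, μ u * ENNReal.ofReal ((C + |(u.2 : ℝ)|) * exp (dot c (toR u))) < ⊤ := by
  set e₂ : ℝ × ℝ := (0, 1)
  have hle : ∀ u : ℤ × ℤ, (C + |(u.2 : ℝ)|) * exp (dot c (toR u)) ≤
      (C + 1) * (exp (dot (c + e₂) (toR u)) + exp (dot (c - e₂) (toR u))) := by
    intro u
    have hdot : dot e₂ (toR u) = u.2 := by simp [e₂, dot, toR]
    rw [dot_add_left, dot_sub_left, hdot, sub_eq_add_neg, exp_add, exp_add]
    have h := abs_le_exp_add_exp_neg (u.2 : ℝ)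
    have h' : 1 ≤ exp (u.2 : ℝ) + exp (-(u.2 : ℝ)) := by
      linarith [add_one_le_exp (u.2 : ℝ), add_one_le_exp (-(u.2 : ℝ))]
    have key : C + |(u.2 : ℝ)| ≤ (C + 1) * (exp (u.2 : ℝ) + exp (-(u.2 : ℝ))) := by nlinarith
    calc (C + |(u.2 : ℝ)|) * exp (dot c (toR u))
        ≤ (C + 1) * (exp (u.2 : ℝ) + exp (-(u.2 : ℝ))) * exp (dot c (toR u)) := by gcongr
      _ = _ := by ring
  calc ∑' u, μ u * ENNReal.ofReal ((C + |(u.2 : ℝ)|) * exp (dot c (toR u)))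
      ≤ ∑' u, ENNReal.ofReal (C + 1) * (μ u * ENNReal.ofReal (exp (dot (c + e₂) (toR u))) +
          μ u * ENNReal.ofReal (exp (dot (c - e₂) (toR u)))) := by
        refine ENNReal.tsum_le_tsum fun u => ?_
        rw [← mul_add, mul_left_comm, ← ENNReal.ofReal_add (exp_pos _).le (exp_pos _).le,
          ← ENNReal.ofReal_mul (by linarith)]
        gcongr μ u * ENNReal.ofReal ?_
        exact hle u
    _ = ENNReal.ofReal (C + 1) * (jumpGF μ (c + e₂) + jumpGF μ (c - e₂)) := by
        rw [ENNReal.tsum_mul_left, ENNReal.tsum_add]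
        rfl
    _ < ⊤ := ENNReal.mul_lt_top ENNReal.ofReal_lt_top (ENNReal.add_lt_top.2 ⟨h3 _, h3 _⟩)

lemma Eexit1_eq_Eexit (z : ℤ × ℤ) (f : ℤ × ℤ → ℝ≥0∞) :
    Eexit1 μ z f = Eexit μ quadrant z fun w => if w.1 ≤ 0 ∧ 0 < w.2 then f w else 0 := by
  simp only [Eexit1, Eexit, mul_ite, mul_zero]

end LeftExit

/-- **Corollary 3.1.**  Under (H1) and (H3), for `a = a(1,0)`, the function
`z ↦ E_z(|S₂(τ)| exp(a·S(τ)); τ = τ₁ < τ₂)` is finite on `ℕ*×ℕ*`. -/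
theorem finiteness_S2_exit_left
    (μ : ℤ × ℤ → ℝ≥0∞) (hprob : ∑' z : ℤ × ℤ, μ z = 1)
    (h1 : H1 μ) (h3 : H3 μ)
    (aOf : ℝ × ℝ → ℝ × ℝ) (haOf : IsDirMap μ aOf) :
    ∀ z ∈ quadrant,
      Eexit1 μ z (fun w =>
          ENNReal.ofReal
            (|(w.2 : ℝ)| * Real.exp (dot (aOf ((1 : ℝ), (0 : ℝ))) (toR w)))) < ⊤ := by
  intro z hz
  obtain ⟨b, hb, hab₂⟩ := exists_jumpGF_lt_one_snd_gt hprob h1 h3 haOf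
  set a := aOf (1, 0)
  have hab₁ : b.1 ≤ a.1 := by simpa [dot] using (haOf.dot_lt (q := (1, 0)) (by simp) hb).le
  set M := ∑' u, μ u *
    ENNReal.ofReal (((b.2 - a.2)⁻¹ + |(u.2 : ℝ)|) * exp (dot (b.1, a.2) (toR u)))
  have hM : M < ⊤ :=
    h3.tsum_mul_ofReal_add_abs_snd_mul_exp_lt_top (inv_nonneg.2 (sub_pos.2 hab₂).le) _
  rw [Eexit1_eq_Eexit, Eexit_eq_tsum_greenK_mul z fun w hw => if_neg fun h => (not_le.2 hw.1) h.1]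
  calc _ ≤ ∑' v, greenK μ quadrant z v * (expWeight b v * M) := by
        refine ENNReal.tsum_le_tsum fun v => ?_
        by_cases hv : v ∈ quadrant
        · gcongr
          exact tsum_mu_sub_mul_leftExit_le hab₁ hab₂ hv.2.le
        · simp [greenK_eq_zero_of_notMem hz hv]
    _ = (∑' v, greenK μ quadrant z v * expWeight b v) * M := by
        rw [← ENNReal.tsum_mul_right]
        simp only [mul_assoc]
    _ ≤ (1 - jumpGF μ b)⁻¹ * expWeight b z * M := by
        gcongr
        exact tsum_greenK_mul_expWeight_le quadrant z b
    _ < ⊤ := ENNReal.mul_lt_top (ENNReal.mul_lt_top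
        (ENNReal.inv_lt_top.2 (tsub_pos_of_lt hb)) ENNReal.ofReal_lt_top) hM

end KRWQ
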